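/- Let f(z) = β + iπν(−∞) + ∫_ℝ log(√(1+t²)/(t−z)) dν(t) with β ∈ ℝ and ν non-decreasing with values in [0,1]. If ν satisfies ν(x) = (ν(x+0)+ν(x−0))/2 at every x, then for every x ∈ ℝ, lim_{y↓0} Im f(x+iy) = πν(x). -/

import Mathlib

/-!
For `z = x + iy` with `y > 0`, `√(1+t²)/(t - z)` is a positive multiple of `t - z̄`, so the
imaginary part of the integrand is `π/2 - arctan((t - x)/y)`. It is bounded by `π` and tends to
`π`, `π/2`, `0` as `y ↓ 0` according as `t < x`, `t = x`, `t > x`. Dominated convergence gives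
`Im f(x+iy) → πc + π μ(-∞, x) + (π/2) μ{x} = πc + π(ν(x-0) - c) + (π/2)(ν(x+0) - ν(x-0))`,
which is `πν(x)` by the normalisation `ν(x) = (ν(x+0) + ν(x-0))/2`.
-/

open MeasureTheory Complex Filter Function Set Topology
open scoped ComplexConjugate Real

namespace Complex

theorem arg_eq_pi_div_two_sub_arctan {w : ℂ} (hw : 0 < w.im) :
    arg w = π / 2 - Real.arctan (w.re / w.im) := by
  have hw0 : w ≠ 0 := fun h => by simp [h] at hw
  have harg_pos : 0 < arg w := by
    rcases (arg_nonneg_iff.2 hw.le).lt_or_eq with h | h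
    · exact h
    · exact absurd (arg_eq_zero_iff.1 h.symm).2 hw.ne'
  have harg_lt : arg w < π := arg_lt_pi_iff.2 (Or.inr hw.ne')
  have htan : Real.tan (π / 2 - arg w) = w.re / w.im := by
    rw [Real.tan_pi_div_two_sub, Real.tan_eq_sin_div_cos, sin_arg, cos_arg hw0, inv_div]
    field_simp
  have := Real.arctan_tan (x := π / 2 - arg w) (by linarith) (by linarith)
  rw [htan] at this
  linarith

theorem norm_log_le_of_norm_le_of_norm_inv_le {w : ℂ} {C : ℝ} (hw : w ≠ 0) (hC : ‖w‖ ≤ C)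
    (hC' : ‖w‖⁻¹ ≤ C) : ‖log w‖ ≤ Real.log C + π := by
  have hpos : 0 < ‖w‖ := norm_pos_iff.2 hw
  have habs : |Real.log ‖w‖| ≤ Real.log C := by
    rw [abs_le, neg_le, ← Real.log_inv]
    exact ⟨Real.log_le_log (inv_pos.2 hpos) hC', Real.log_le_log hpos hC⟩
  calc ‖log w‖ ≤ |(log w).re| + |(log w).im| := norm_le_abs_re_add_abs_im _
    _ ≤ Real.log C + π := by
      rw [log_re, log_im]
      exact add_le_add habs (abs_arg_le_pi w)

end Complex

noncomputable def logKernel (z : ℂ) (t : ℝ) : ℂ := log ((Real.sqrt (1 + t ^ 2) : ℂ) / ((t : ℂ) - z))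

section LogKernel

variable {z : ℂ} {μ : Measure ℝ} [IsFiniteMeasure μ]

lemma ofReal_sub_ne_zero_of_im_pos (hz : 0 < z.im) (t : ℝ) : (t : ℂ) - z ≠ 0 :=
  sub_ne_zero.2 fun h => hz.ne (by simpa using congrArg im h)

lemma exists_pos_real_mul_eq_sqrt_div_sub (hz : 0 < z.im) (t : ℝ) :
    ∃ r : ℝ, 0 < r ∧ (Real.sqrt (1 + t ^ 2) : ℂ) / ((t : ℂ) - z) = r * ((t : ℂ) - conj z) := by
  have hd := ofReal_sub_ne_zero_of_im_pos hz t
  refine ⟨Real.sqrt (1 + t ^ 2) * (normSq ((t : ℂ) - z))⁻¹,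
    mul_pos (Real.sqrt_pos.2 (by positivity)) (inv_pos.2 (normSq_pos.2 hd)), ?_⟩
  rw [div_eq_mul_inv, inv_def, map_sub, conj_ofReal]
  push_cast
  ring

lemma im_sqrt_div_sub_pos (hz : 0 < z.im) (t : ℝ) :
    0 < ((Real.sqrt (1 + t ^ 2) : ℂ) / ((t : ℂ) - z)).im := by
  obtain ⟨r, hr, h⟩ := exists_pos_real_mul_eq_sqrt_div_sub hz t
  rw [h, im_ofReal_mul]
  simpa using mul_pos hr hz

lemma logKernel_im (hz : 0 < z.im) (t : ℝ) :
    (logKernel z t).im = π / 2 - Real.arctan ((t - z.re) / z.im) := by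
  obtain ⟨r, hr, h⟩ := exists_pos_real_mul_eq_sqrt_div_sub hz t
  rw [logKernel, log_im, h, arg_real_mul _ hr, arg_eq_pi_div_two_sub_arctan (by simpa using hz)]
  simp

lemma norm_logKernel_le (hz : 0 < z.im) (t : ℝ) :
    ‖logKernel z t‖ ≤ Real.log (1 + ‖z‖ + (1 + ‖z‖) / z.im) + π := by
  have hd := ofReal_sub_ne_zero_of_im_pos hz t
  set s := Real.sqrt (1 + t ^ 2)
  set A := ‖(t : ℂ) - z‖
  set K := ‖z‖
  have hK : 0 ≤ K := norm_nonneg z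
  have hA : 0 < A := norm_pos_iff.2 hd
  have hs_one : 1 ≤ s := Real.one_le_sqrt.2 (by nlinarith)
  have ht_s : |t| ≤ s := Real.abs_le_sqrt (by nlinarith)
  have hs_t : s ≤ 1 + |t| :=
    Real.sqrt_le_iff.2 ⟨by positivity, by nlinarith [sq_abs t, abs_nonneg t]⟩
  have hz_A : z.im ≤ A := (le_abs_self _).trans (by simpa using abs_im_le_norm ((t : ℂ) - z))
  have ht_A : |t| ≤ A + K := by simpa using norm_le_norm_sub_add (t : ℂ) z
  have hA_t : A ≤ |t| + K := by simpa using norm_sub_le (t : ℂ) z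
  have hnorm : ‖(s : ℂ) / ((t : ℂ) - z)‖ = s / A := by
    rw [norm_div, norm_real, Real.norm_of_nonneg (by positivity)]
  apply norm_log_le_of_norm_le_of_norm_inv_le
    (div_ne_zero (ofReal_ne_zero.2 (zero_lt_one.trans_le hs_one).ne') hd)
  · rw [hnorm, div_le_iff₀ hA]
    have : 1 + K ≤ (1 + K) / z.im * A := by
      rw [div_mul_eq_mul_div, le_div_iff₀ hz]; nlinarith
    nlinarith
  · rw [hnorm, inv_div, div_le_iff₀ (by positivity)]
    have : 0 ≤ (1 + K) / z.im * s := by positivity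
    nlinarith

lemma continuous_logKernel (hz : 0 < z.im) : Continuous (logKernel z) :=
  (Continuous.div (by fun_prop) (by fun_prop) (ofReal_sub_ne_zero_of_im_pos hz)).clog
    fun t => mem_slitPlane_iff.2 (Or.inr (im_sqrt_div_sub_pos hz t).ne')

lemma integrable_logKernel (hz : 0 < z.im) : Integrable (logKernel z) μ :=
  (integrable_const _).mono' (continuous_logKernel hz).aestronglyMeasurable
    (ae_of_all _ (norm_logKernel_le hz))

lemma im_integral_logKernel (hz : 0 < z.im) :
    (∫ t, logKernel z t ∂μ).im = ∫ t, (π / 2 - Real.arctan ((t - z.re) / z.im)) ∂μ := by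
  calc (∫ t, logKernel z t ∂μ).im = ∫ t, (logKernel z t).im ∂μ :=
        (integral_im (integrable_logKernel hz)).symm
    _ = _ := integral_congr_ae (ae_of_all _ (logKernel_im hz))

end LogKernel

section ArctanIntegral

variable {μ : Measure ℝ} [IsFiniteMeasure μ]

lemma tendsto_pi_div_two_sub_arctan_div (x t : ℝ) :
    Tendsto (fun y => π / 2 - Real.arctan ((t - x) / y)) (𝓝[>] 0)
      (𝓝 ((Iio x).indicator (fun _ => π) t + ({x} : Set ℝ).indicator (fun _ => π / 2) t)) := by
  rcases lt_trichotomy t x with h | rfl | h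
  · have h1 : Tendsto (fun y : ℝ => (t - x) / y) (𝓝[>] 0) atBot :=
      (tendsto_const_mul_atBot_of_neg (sub_neg.2 h)).2 tendsto_inv_nhdsGT_zero
    have := ((Real.tendsto_arctan_atBot.mono_right nhdsWithin_le_nhds).comp h1).const_sub (π / 2)
    simpa [h, h.ne, Pi.single_apply, add_halves] using this
  · simp
  · have h1 : Tendsto (fun y : ℝ => (t - x) / y) (𝓝[>] 0) atTop :=
      (tendsto_const_mul_atTop_of_pos (sub_pos.2 h)).2 tendsto_inv_nhdsGT_zero
    have := ((Real.tendsto_arctan_atTop.mono_right nhdsWithin_le_nhds).comp h1).const_sub (π / 2)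
    simpa [h.not_gt, h.ne'] using this

lemma tendsto_integral_pi_div_two_sub_arctan_div (x : ℝ) :
    Tendsto (fun y => ∫ t, (π / 2 - Real.arctan ((t - x) / y)) ∂μ) (𝓝[>] 0)
      (𝓝 (μ.real (Iio x) * π + μ.real {x} * (π / 2))) := by
  have hlim : ∫ t, ((Iio x).indicator (fun _ => π) t
      + ({x} : Set ℝ).indicator (fun _ => π / 2) t) ∂μ
      = μ.real (Iio x) * π + μ.real {x} * (π / 2) := by
    rw [integral_add ((integrable_const _).indicator measurableSet_Iio)
      ((integrable_const _).indicator (measurableSet_singleton x)),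
      integral_indicator_const _ measurableSet_Iio,
      integral_indicator_const _ (measurableSet_singleton x), smul_eq_mul, smul_eq_mul]
  rw [← hlim]
  refine tendsto_integral_filter_of_dominated_convergence (fun _ => π) ?_ ?_
    (integrable_const _) (ae_of_all _ (tendsto_pi_div_two_sub_arctan_div x))
  · exact Eventually.of_forall fun y => (by fun_prop : Continuous _).aestronglyMeasurable
  · refine Eventually.of_forall fun y => ae_of_all _ fun t => ?_
    rw [Real.norm_eq_abs, abs_le]
    constructor <;> linarith [Real.arctan_lt_pi_div_two ((t - x) / y),
      Real.neg_pi_div_two_lt_arctan ((t - x) / y), Real.pi_pos]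

end ArctanIntegral

section IntervalMeasures

variable {ν : ℝ → ℝ} {μ : Measure ℝ}

lemma measureReal_Ioo_eq (hmono : Monotone ν)
    (hμ : ∀ a b : ℝ, a < b → μ (Ioo a b) = ENNReal.ofReal (leftLim ν b - rightLim ν a))
    {a b : ℝ} (hab : a < b) : μ.real (Ioo a b) = leftLim ν b - rightLim ν a := by
  rw [measureReal_def, hμ a b hab,
    ENNReal.toReal_ofReal (sub_nonneg.2 (hmono.rightLim_le_leftLim hab))]

lemma measureReal_singleton_eq [IsFiniteMeasure μ] (hmono : Monotone ν)
    (hμ : ∀ a b : ℝ, a < b → μ (Ioo a b) = ENNReal.ofReal (leftLim ν b - rightLim ν a))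
    (x : ℝ) : μ.real {x} = rightLim ν x - leftLim ν x := by
  have hx₁ : x - 1 < x := sub_one_lt x
  have hx₂ : x < x + 1 := lt_add_one x
  have hsplit := congrArg μ.real (Ioo_union_Ico_eq_Ioo hx₁ hx₂.le)
  rw [measureReal_union (disjoint_left.2 fun _ h₁ h₂ => h₁.2.not_ge h₂.1) measurableSet_Ico,
    ← Ioo_insert_left hx₂, insert_eq, measureReal_union (by simp) measurableSet_Ioo,
    measureReal_Ioo_eq hmono hμ hx₁,
    measureReal_Ioo_eq hmono hμ hx₂, measureReal_Ioo_eq hmono hμ (hx₁.trans hx₂)] at hsplit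
  linarith

lemma measureReal_Iio_eq (hmono : Monotone ν)
    (hμ : ∀ a b : ℝ, a < b → μ (Ioo a b) = ENNReal.ofReal (leftLim ν b - rightLim ν a))
    {c : ℝ} (hc : Tendsto ν atBot (𝓝 c)) (x : ℝ) : μ.real (Iio x) = leftLim ν x - c := by
  have hR : Tendsto (rightLim ν) atBot (𝓝 c) :=
    tendsto_of_tendsto_of_tendsto_of_le_of_le hc
      (hc.comp (tendsto_atBot_add_const_right _ 1 tendsto_id))
      (fun a => hmono.le_rightLim le_rfl) (fun a => hmono.rightLim_le (lt_add_one a))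
  have hunion : Tendsto (fun a => μ (Ioo a x)) atBot (𝓝 (μ (Iio x))) := by
    rw [← iUnion_Ioo_left]
    exact tendsto_measure_iUnion_atBot fun a b hab => Ioo_subset_Ioo_left hab
  have hlim : Tendsto (fun a => μ (Ioo a x)) atBot (𝓝 (ENNReal.ofReal (leftLim ν x - c))) :=
    (ENNReal.tendsto_ofReal (tendsto_const_nhds.sub hR)).congr'
      ((eventually_lt_atBot x).mono fun a ha => (hμ a x ha).symm)
  rw [measureReal_def, tendsto_nhds_unique hunion hlim, ENNReal.toReal_ofReal]
  exact sub_nonneg.2 ((hmono.le_of_tendsto hc (x - 1)).trans (hmono.le_leftLim (sub_one_lt x)))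

end IntervalMeasures

theorem stmt_14_general (ν : ℝ → ℝ) (hmono : Monotone ν)
    (hmid : ∀ x, ν x = (Function.rightLim ν x + Function.leftLim ν x) / 2)
    (μ : Measure ℝ) [IsFiniteMeasure μ]
    (hμ : ∀ a b : ℝ, a < b →
      μ (Set.Ioo a b) = ENNReal.ofReal (Function.leftLim ν b - Function.rightLim ν a))
    (β c : ℝ) (hc : Tendsto ν atBot (nhds c))
    (f : ℂ → ℂ)
    (hf : ∀ z : ℂ, 0 < z.im →
      f z = (β : ℂ) + Complex.I * Real.pi * (c : ℂ) +
        ∫ t : ℝ, Complex.log ((Real.sqrt (1 + t ^ 2) : ℂ) / ((t : ℂ) - z)) ∂μ) :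
    ∀ x : ℝ, Tendsto (fun y : ℝ => (f ((x : ℂ) + (y : ℂ) * Complex.I)).im)
      (nhdsWithin 0 (Set.Ioi 0)) (nhds (Real.pi * ν x)) := by
  intro x
  have him : ∀ y : ℝ, 0 < y → (f (x + y * I)).im
      = π * c + ∫ t, (π / 2 - Real.arctan ((t - x) / y)) ∂μ := by
    intro y hy
    have hz : 0 < ((x : ℂ) + y * I).im := by simpa using hy
    have := im_integral_logKernel (μ := μ) hz
    simp only [add_re, add_im, ofReal_re, ofReal_im, mul_re, mul_im, I_re, I_im] at this
    rw [hf _ hz, add_im]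
    simpa [logKernel] using this
  have hlimit : π * c + (μ.real (Iio x) * π + μ.real {x} * (π / 2)) = π * ν x := by
    rw [measureReal_Iio_eq hmono hμ hc, measureReal_singleton_eq hmono hμ, hmid x]
    ring
  rw [← hlimit]
  exact ((tendsto_integral_pi_div_two_sub_arctan_div x).const_add _).congr'
    (eventually_nhdsWithin_of_forall fun y hy => (him y hy).symm)

theorem stmt_14 (ν : ℝ → ℝ) (hmono : Monotone ν)
    (hrange : ∀ x, ν x ∈ Set.Icc (0 : ℝ) 1)
    (hmid : ∀ x, ν x = (Function.rightLim ν x + Function.leftLim ν x) / 2)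
    (μ : Measure ℝ) [IsFiniteMeasure μ]
    (hμ : ∀ a b : ℝ, a < b →
      μ (Set.Ioo a b) = ENNReal.ofReal (Function.leftLim ν b - Function.rightLim ν a))
    (β c : ℝ) (hc : Tendsto ν atBot (nhds c))
    (f : ℂ → ℂ)
    (hf : ∀ z : ℂ, 0 < z.im →
      f z = (β : ℂ) + Complex.I * Real.pi * (c : ℂ) +
        ∫ t : ℝ, Complex.log ((Real.sqrt (1 + t ^ 2) : ℂ) / ((t : ℂ) - z)) ∂μ) :
    ∀ x : ℝ, Tendsto (fun y : ℝ => (f ((x : ℂ) + (y : ℂ) * Complex.I)).im)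
      (nhdsWithin 0 (Set.Ioi 0)) (nhds (Real.pi * ν x)) :=
  stmt_14_general ν hmono hmid μ hμ β c hc f hf
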